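/- arXiv:1210.6325 — 4 statements merged into one kernel-verified Lean document; each statement's English description precedes it below -/
import Mathlib

section
/- Let V : ℝ → ℝ be continuous, let t < s, and let E₀ ∈ ℝ satisfy |tr A[V](E₀,t,s)| < 2. Then on the open set of energies E with |tr A[V](E,t,s)| < 2, the function E ↦ Θ(A[V](E,t,s)) is differentiable at E₀ and (d/dE) Θ(A[V](E,t,s))|_{E=E₀} > 0. (Lemma 2.1.) -/
open MeasureTheory Filter Real
noncomputable section

attribute [local instance] Matrix.normedAddCommGroup Matrix.normedSpace
attribute [local instance] Classical.propDecidable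

/-- The rotation matrix of angle `2πθ`. -/
def rot (θ : ℝ) : Matrix (Fin 2) (Fin 2) ℝ :=
  !![Real.cos (2 * π * θ), -Real.sin (2 * π * θ);
     Real.sin (2 * π * θ), Real.cos (2 * π * θ)]

/-- The Möbius action of a real 2×2 matrix on ℂ. -/
def moebius (A : Matrix (Fin 2) (Fin 2) ℝ) (z : ℂ) : ℂ :=
  ((A 0 0 : ℝ) * z + (A 0 1 : ℝ)) / ((A 1 0 : ℝ) * z + (A 1 1 : ℝ))

/-- The fixed point `u(A)` in the upper half-plane of an elliptic `A ∈ SL(2,ℝ)`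
(junk value `i` if there is none). -/
def fixedPt (A : Matrix (Fin 2) (Fin 2) ℝ) : ℂ :=
  if h : ∃ z : ℂ, 0 < z.im ∧ moebius A z = z then h.choose else Complex.I

/-- `θ ∈ (0,1/2) ∪ (1/2,1)` is a rotation number for `A` if `A` is conjugate in `SL(2,ℝ)`
to the rotation `R_θ`. -/
def IsRotationNumber (A : Matrix (Fin 2) (Fin 2) ℝ) (θ : ℝ) : Prop :=
  (θ ∈ Set.Ioo (0:ℝ) (1/2) ∪ Set.Ioo (1/2:ℝ) 1) ∧
    ∃ B : Matrix (Fin 2) (Fin 2) ℝ, B.det = 1 ∧ B * A * B⁻¹ = rot θ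

/-- `Θ(A)`: the rotation number of an elliptic `A ∈ SL(2,ℝ)` (junk value `0` if none). -/
def Theta (A : Matrix (Fin 2) (Fin 2) ℝ) : ℝ :=
  if h : ∃ θ : ℝ, IsRotationNumber A θ then h.choose else 0

/-- The hyperbolic distance on the upper half-plane. -/
def hypDist (z w : ℂ) : ℝ :=
  2 * Real.arsinh (‖z - w‖ / (2 * Real.sqrt (z.im * w.im)))

/-- `A` is the family of transfer matrices `A[V](E,t,s)` of the continuum Schrödinger
operator with potential `V`: `A[V](E,t,t) = Id`, it takes values in `SL(2,ℝ)`, and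
`(d/ds) A[V](E,t,s) = [[0, −E−V(s)],[1,0]] · A[V](E,t,s)`. -/
def IsTransferFamily (V : ℝ → ℝ) (A : ℝ → ℝ → ℝ → Matrix (Fin 2) (Fin 2) ℝ) : Prop :=
  (∀ E t, A E t t = 1) ∧
  (∀ E t s, (A E t s).det = 1) ∧
  (∀ E t s, HasDerivAt (fun s' => A E t s') (!![0, -E - V s; 1, 0] * A E t s) s)

-- Ends the section above and with it the entrywise sup norm on matrices, which is not
-- submultiplicative.
end

/-!
Elliptic `A ∈ SL(2,ℝ)` have `A 1 0 ≠ 0`, and `Θ(A) = arccos (tr A / 2) / 2π` if `A 1 0 > 0`,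
`Θ(A) = 1 - arccos (tr A / 2) / 2π` if `A 1 0 < 0`. Since the sign of `A[V](E,t,s) 1 0` is
locally constant in `E`, it suffices to show that `∂_E tr A[V](E,t,s)` has the sign opposite to
`A[V](E₀,t,s) 1 0`.

Write `A(E,τ) = A[V](E,t,τ)` and `N = [[0,-1],[0,0]] = ∂_E [[0,-E-V],[1,0]]`. The matrices
`D(τ) = A(E₀,τ)⁻¹ A(E,τ)` solve `D' = (E - E₀) A(E₀,τ)⁻¹ N A(E₀,τ) D`, `D(t) = 1`, so Gronwall's
inequality gives `∂_E A(E,s) = A(E₀,s) ∫_t^s A(E₀,u)⁻¹ N A(E₀,u) du` at `E₀`, and hence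
`∂_E tr A(E,s) = -∫_t^s (A(E₀,u) A(E₀,s) A(E₀,u)⁻¹) 1 0 du`. For elliptic `A`, the lower-left
entry of `g A g⁻¹` is a definite quadratic form in the bottom row of `g`, so it has the sign of
`A 1 0`, and so does the integral.
-/

open Real Set Filter Topology

section LinearODE

variable {𝔸 : Type*} [NormedRing 𝔸] [NormedAlgebra ℝ 𝔸]

theorem gronwallBound_zero_self (K x : ℝ) : gronwallBound 0 K K x = exp (K * x) - 1 := by
  rcases eq_or_ne K 0 with rfl | hK
  · simp [gronwallBound_K0]
  · rw [gronwallBound_of_K_ne_0 hK, div_self hK]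
    ring

theorem norm_sub_one_le_of_hasDerivAt_smul_mul {D B : ℝ → 𝔸} {ε β t s : ℝ}
    (hD : ∀ τ, HasDerivAt D (ε • B τ * D τ) τ) (hD₀ : D t = 1)
    (hB : ∀ τ ∈ Icc t s, ‖B τ‖ ≤ β) :
    ∀ τ ∈ Icc t s, ‖D τ - 1‖ ≤ exp (|ε| * β * (τ - t)) - 1 := by
  intro τ hτ
  rw [← gronwallBound_zero_self]
  refine norm_le_gronwallBound_of_norm_deriv_right_le (f := fun τ => D τ - 1) ?_
    (fun τ _ => ((hD τ).sub_const 1).hasDerivWithinAt) (by simp [hD₀]) ?_ τ hτ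
  · exact ((continuous_iff_continuousAt.2 fun τ => (hD τ).continuousAt).sub
      continuous_const).continuousOn
  · intro τ hτ
    have hBτ := hB τ (Ico_subset_Icc_self hτ)
    have : ‖B τ * (D τ - 1) + B τ‖ ≤ β * ‖D τ - 1‖ + β :=
      (norm_add_le _ _).trans <| add_le_add
        ((norm_mul_le _ _).trans (mul_le_mul_of_nonneg_right hBτ (norm_nonneg _))) hBτ
    calc ‖ε • B τ * D τ‖ = |ε| * ‖B τ * (D τ - 1) + B τ‖ := by
          rw [smul_mul_assoc, norm_smul, Real.norm_eq_abs, mul_sub, mul_one, sub_add_cancel]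
      _ ≤ |ε| * (β * ‖D τ - 1‖ + β) := by gcongr
      _ = |ε| * β * ‖D τ - 1‖ + |ε| * β := by ring

theorem sub_one_eq_smul_integral_of_hasDerivAt_smul_mul [CompleteSpace 𝔸] {D B : ℝ → 𝔸}
    {ε t s : ℝ} (hB : Continuous B) (hD : ∀ τ, HasDerivAt D (ε • B τ * D τ) τ) (hD₀ : D t = 1) :
    D s - 1 = ε • ∫ τ in t..s, B τ * D τ := by
  have hBD : Continuous fun τ => B τ * D τ :=
    hB.mul (continuous_iff_continuousAt.2 fun τ => (hD τ).continuousAt)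
  rw [← hD₀, ← intervalIntegral.integral_smul,
    ← intervalIntegral.integral_eq_sub_of_hasDerivAt (fun τ _ => hD τ)]
  · simp_rw [smul_mul_assoc]
  · simp_rw [smul_mul_assoc]
    exact (hBD.const_smul ε).intervalIntegrable _ _

theorem hasDerivAt_zero_of_hasDerivAt_smul_mul [CompleteSpace 𝔸] {D : ℝ → ℝ → 𝔸} {B : ℝ → 𝔸}
    {t s : ℝ} (hB : Continuous B) (hD : ∀ ε τ, HasDerivAt (D ε) (ε • B τ * D ε τ) τ)
    (hD₀ : ∀ ε, D ε t = 1) (hts : t ≤ s) :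
    HasDerivAt (fun ε => D ε s) (∫ τ in t..s, B τ) 0 := by
  obtain ⟨β, hβ⟩ := (isCompact_Icc (a := t) (b := s)).exists_bound_of_continuousOn hB.continuousOn
  have hβ₀ : 0 ≤ β := (norm_nonneg _).trans (hβ t (left_mem_Icc.2 hts))
  have hduhamel := fun ε => sub_one_eq_smul_integral_of_hasDerivAt_smul_mul (s := s) hB (hD ε)
    (hD₀ ε)
  have hslope : ∀ ε ≠ 0, slope (fun ε => D ε s) 0 ε = ∫ τ in t..s, B τ * D ε τ := by
    intro ε hε
    have hD0s : D 0 s = 1 := by simpa [sub_eq_zero] using hduhamel 0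
    rw [slope_def_module, hD0s, sub_zero, hduhamel, inv_smul_smul₀ hε]
  rw [hasDerivAt_iff_tendsto_slope,
    tendsto_congr' (eventually_nhdsWithin_of_forall (s := {0}ᶜ) hslope),
    tendsto_iff_norm_sub_tendsto_zero]
  have hbound : ∀ ε, ‖(∫ τ in t..s, B τ * D ε τ) - ∫ τ in t..s, B τ‖
      ≤ β * (exp (|ε| * β * (s - t)) - 1) * |s - t| := by
    intro ε
    have hBD : Continuous fun τ => B τ * D ε τ :=
      hB.mul (continuous_iff_continuousAt.2 fun τ => (hD ε τ).continuousAt)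
    rw [← intervalIntegral.integral_sub (hBD.intervalIntegrable _ _)
      (hB.intervalIntegrable _ _)]
    refine intervalIntegral.norm_integral_le_of_norm_le_const fun τ hτ => ?_
    have hτ' : τ ∈ Icc t s := Ioc_subset_Icc_self (by rwa [uIoc_of_le hts] at hτ)
    calc ‖B τ * D ε τ - B τ‖ ≤ ‖B τ‖ * ‖D ε τ - 1‖ := by
          rw [← mul_sub_one]; exact norm_mul_le _ _
      _ ≤ β * (exp (|ε| * β * (τ - t)) - 1) :=
          mul_le_mul (hβ τ hτ') (norm_sub_one_le_of_hasDerivAt_smul_mul (hD ε) (hD₀ ε) hβ τ hτ')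
            (norm_nonneg _) hβ₀
      _ ≤ β * (exp (|ε| * β * (s - t)) - 1) := by gcongr; exact hτ'.2
  refine squeeze_zero (fun _ => norm_nonneg _) hbound ?_
  have hcont : Continuous fun ε : ℝ => β * (exp (|ε| * β * (s - t)) - 1) * |s - t| := by
    fun_prop
  simpa using hcont.continuousAt.tendsto.mono_left (nhdsWithin_le_nhds (a := (0 : ℝ)))

end LinearODE

section SL2

variable {R : Type*} [CommRing R]

theorem Matrix.conj_apply_one_zero (g X : Matrix (Fin 2) (Fin 2) R) :
    (g * X * g.adjugate) 1 0 =
      X 1 0 * g 1 1 ^ 2 + (X 0 0 - X 1 1) * g 1 0 * g 1 1 - X 0 1 * g 1 0 ^ 2 := by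
  simp only [Matrix.adjugate_fin_two, Matrix.mul_apply, Fin.sum_univ_two, Matrix.of_apply,
    Matrix.cons_val', Matrix.cons_val_zero, Matrix.cons_val_one, Matrix.cons_val_fin_one]
  ring

theorem Matrix.adjugate_fin_two_eq_trace_smul_one_sub (X : Matrix (Fin 2) (Fin 2) R) :
    X.adjugate = X.trace • 1 - X := by
  ext i j
  fin_cases i <;> fin_cases j <;> simp [Matrix.adjugate_fin_two, Matrix.trace_fin_two]

theorem Matrix.inv_eq_adjugate_of_det_eq_one {n : Type*} [Fintype n] [DecidableEq n]
    {A : Matrix n n R} (h : A.det = 1) : A⁻¹ = A.adjugate := by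
  simp [Matrix.inv_def, h]

variable {A g : Matrix (Fin 2) (Fin 2) ℝ}

theorem Matrix.apply_one_zero_ne_zero_of_abs_trace_lt_two (hA : A.det = 1)
    (htr : |A.trace| < 2) : A 1 0 ≠ 0 := by
  intro h
  rw [Matrix.det_fin_two, h, mul_zero, sub_zero] at hA
  rw [Matrix.trace_fin_two, abs_lt] at htr
  nlinarith [sq_nonneg (A 0 0 - A 1 1)]

theorem Matrix.apply_one_zero_mul_conj_apply_one_zero_pos (hA : A.det = 1)
    (htr : |A.trace| < 2) (hg : g.det = 1) : 0 < A 1 0 * (g * A * g.adjugate) 1 0 := by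
  have hr := Matrix.apply_one_zero_ne_zero_of_abs_trace_lt_two hA htr
  rw [Matrix.conj_apply_one_zero]
  rw [Matrix.det_fin_two] at hA hg
  rw [Matrix.trace_fin_two, abs_lt] at htr
  -- the quadratic form in `(g 1 0, g 1 1)` has discriminant `(tr A) ^ 2 - 4 < 0`
  have hsq : 4 * (A 1 0 * (A 1 0 * g 1 1 ^ 2 + (A 0 0 - A 1 1) * g 1 0 * g 1 1
      - A 0 1 * g 1 0 ^ 2)) = (2 * A 1 0 * g 1 1 + (A 0 0 - A 1 1) * g 1 0) ^ 2
        + g 1 0 ^ 2 * (4 - (A 0 0 + A 1 1) ^ 2) := by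
    linear_combination (4 * g 1 0 ^ 2) * hA
  rcases eq_or_ne (g 1 0) 0 with hc | hc
  · have hd : g 1 1 ≠ 0 := by rintro hd; simp [hc, hd] at hg
    have : 0 < (2 * A 1 0 * g 1 1) ^ 2 := by positivity
    simp only [hc] at hsq ⊢
    linarith
  · have : 0 < g 1 0 ^ 2 * (4 - (A 0 0 + A 1 1) ^ 2) := mul_pos (by positivity) (by nlinarith)
    nlinarith [sq_nonneg (2 * A 1 0 * g 1 1 + (A 0 0 - A 1 1) * g 1 0)]

end SL2

section RotationNumber

variable {A : Matrix (Fin 2) (Fin 2) ℝ} {θ : ℝ}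

theorem trace_rot (θ : ℝ) : (rot θ).trace = 2 * cos (2 * π * θ) := by
  rw [rot, Matrix.trace_fin_two]
  simp only [Matrix.of_apply, Matrix.cons_val', Matrix.cons_val_zero, Matrix.cons_val_one,
    Matrix.empty_val', Matrix.cons_val_fin_one]
  ring

noncomputable def rotationAngle (A : Matrix (Fin 2) (Fin 2) ℝ) : ℝ :=
  if 0 < A 1 0 then arccos (A.trace / 2) / (2 * π) else 1 - arccos (A.trace / 2) / (2 * π)

theorem rotationAngle_spec (htr : |A.trace| < 2) (hr : A 1 0 ≠ 0) :
    rotationAngle A ∈ Ioo 0 (1 / 2) ∪ Ioo (1 / 2) 1 ∧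
      cos (2 * π * rotationAngle A) = A.trace / 2 ∧
      0 < A 1 0 * sin (2 * π * rotationAngle A) := by
  rw [abs_lt] at htr
  have hw₁ : -1 < A.trace / 2 := by linarith
  have hw₂ : A.trace / 2 < 1 := by linarith
  have hα₀ : 0 < arccos (A.trace / 2) := arccos_pos.2 hw₂
  have hα₁ : arccos (A.trace / 2) < π := arccos_lt_pi.2 hw₁
  have hsin : 0 < sin (arccos (A.trace / 2)) := by
    rw [sin_arccos]; exact sqrt_pos.2 (by nlinarith)
  have hcos : cos (arccos (A.trace / 2)) = A.trace / 2 := cos_arccos hw₁.le hw₂.le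
  have hπ := pi_pos
  rw [rotationAngle]
  split_ifs with hpos
  · have h2π : 2 * π * (arccos (A.trace / 2) / (2 * π)) = arccos (A.trace / 2) := by
      field_simp
    refine ⟨Or.inl ⟨by positivity, ?_⟩, by rw [h2π, hcos], by rw [h2π]; positivity⟩
    rw [div_lt_iff₀ (by positivity)]
    linarith
  · have hneg : A 1 0 < 0 := lt_of_le_of_ne (not_lt.1 hpos) hr
    have h2π : 2 * π * (1 - arccos (A.trace / 2) / (2 * π)) = 2 * π - arccos (A.trace / 2) := by
      field_simp
    refine ⟨Or.inr ⟨?_, ?_⟩, by rw [h2π, cos_two_pi_sub, hcos], ?_⟩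
    · have : arccos (A.trace / 2) / (2 * π) < 1 / 2 := by
        rw [div_lt_iff₀ (by positivity)]; linarith
      linarith
    · have : 0 < arccos (A.trace / 2) / (2 * π) := by positivity
      linarith
    · rw [h2π, sin_two_pi_sub]
      nlinarith

theorem eq_rotationAngle (hθ : θ ∈ Ioo 0 (1 / 2) ∪ Ioo (1 / 2) 1)
    (hcos : cos (2 * π * θ) = A.trace / 2) (hsin : 0 < A 1 0 * sin (2 * π * θ)) :
    θ = rotationAngle A := by
  have hπ := pi_pos
  rw [rotationAngle, ← hcos]
  rcases hθ with ⟨hθ₀, hθ₁⟩ | ⟨hθ₀, hθ₁⟩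
  · have hpos : 0 < sin (2 * π * θ) := sin_pos_of_pos_of_lt_pi (by positivity) (by nlinarith)
    rw [if_pos (pos_of_mul_pos_left hsin hpos.le), arccos_cos (by positivity) (by nlinarith)]
    field_simp
  · have hpos : 0 < sin (2 * π - 2 * π * θ) :=
      sin_pos_of_pos_of_lt_pi (by nlinarith) (by nlinarith)
    rw [sin_two_pi_sub] at hpos
    have hneg : A 1 0 < 0 := neg_of_mul_pos_left hsin (by linarith)
    rw [if_neg (not_lt.2 hneg.le), ← cos_two_pi_sub, arccos_cos (by nlinarith) (by nlinarith)]
    field_simp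
    ring

theorem IsRotationNumber.cos_eq (h : IsRotationNumber A θ) :
    cos (2 * π * θ) = A.trace / 2 := by
  obtain ⟨-, B, hB, hBA⟩ := h
  have := congrArg Matrix.trace hBA
  rw [trace_rot, Matrix.inv_eq_adjugate_of_det_eq_one hB, Matrix.trace_mul_cycle,
    Matrix.adjugate_mul, hB, one_smul, Matrix.one_mul] at this
  linarith

theorem IsRotationNumber.apply_one_zero_mul_sin_pos (hr : A 1 0 ≠ 0)
    (h : IsRotationNumber A θ) : 0 < A 1 0 * sin (2 * π * θ) := by
  obtain ⟨-, B, hB, hBA⟩ := h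
  rw [Matrix.inv_eq_adjugate_of_det_eq_one hB] at hBA
  have hA' : A = B.adjugate * rot θ * B.adjugate.adjugate := by
    rw [Matrix.adjugate_adjugate' B, Fintype.card_fin, hB, one_pow, one_smul, ← hBA]
    simp only [← Matrix.mul_assoc, Matrix.adjugate_mul, hB, one_smul, Matrix.one_mul]
    rw [Matrix.mul_assoc, Matrix.adjugate_mul, hB, one_smul, Matrix.mul_one]
  have hA₁₀ : A 1 0 = sin (2 * π * θ) * (B.adjugate 1 1 ^ 2 + B.adjugate 1 0 ^ 2) := by
    rw [hA', Matrix.conj_apply_one_zero]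
    simp only [rot, Matrix.of_apply, Matrix.cons_val', Matrix.cons_val_zero,
      Matrix.cons_val_one, Matrix.cons_val_fin_one]
    ring
  have hsin : sin (2 * π * θ) ≠ 0 := fun h0 => hr (by rw [hA₁₀, h0, zero_mul])
  have hQ : B.adjugate 1 1 ^ 2 + B.adjugate 1 0 ^ 2 ≠ 0 := fun h0 => hr (by rw [hA₁₀, h0, mul_zero])
  have : 0 < B.adjugate 1 1 ^ 2 + B.adjugate 1 0 ^ 2 := lt_of_le_of_ne (by positivity) hQ.symm
  rw [hA₁₀, mul_comm, ← mul_assoc]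
  exact mul_pos (mul_self_pos.2 hsin) this

theorem exists_conj_eq_rot (hA : A.det = 1) (hr : A 1 0 ≠ 0)
    (hcos : cos (2 * π * θ) = A.trace / 2) (hsin : 0 < A 1 0 * sin (2 * π * θ)) :
    ∃ B : Matrix (Fin 2) (Fin 2) ℝ, B.det = 1 ∧ B * A * B⁻¹ = rot θ := by
  have hy : 0 < sin (2 * π * θ) / A 1 0 := by
    rw [show sin (2 * π * θ) / A 1 0 = A 1 0 * sin (2 * π * θ) / A 1 0 ^ 2 by field_simp]
    positivity
  set a := sqrt (sin (2 * π * θ) / A 1 0)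
  have ha : 0 < a := sqrt_pos.2 hy
  have hsin_eq : sin (2 * π * θ) = A 1 0 * a ^ 2 := by
    rw [sq_sqrt hy.le]; field_simp
  have hpyth : (A 1 0 * a ^ 2) ^ 2 + (A.trace / 2) ^ 2 = 1 := by
    rw [← hsin_eq, ← hcos, sin_sq_add_cos_sq]
  -- the upper-triangular solution of `B * A = rot θ * B`; its `(1,0)` entry forces `a ^ 2`
  set B : Matrix (Fin 2) (Fin 2) ℝ := !![1 / a, (A 1 1 - A 0 0) / (2 * A 1 0 * a); 0, a]
  have hB : B.det = 1 := by
    simp only [B, Matrix.det_fin_two_of]; field_simp; ring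
  have hBA : B * A = rot θ * B := by
    rw [Matrix.det_fin_two] at hA
    rw [Matrix.trace_fin_two] at hpyth hcos
    rw [rot, hcos, hsin_eq]
    ext i j
    fin_cases i <;> fin_cases j <;>
      simp only [B, one_div, Fin.isValue, Fin.zero_eta, Fin.mk_one, Matrix.mul_apply,
        Fin.sum_univ_two, Matrix.of_apply, Matrix.cons_val', Matrix.cons_val_zero,
        Matrix.cons_val_one, Matrix.cons_val_fin_one, zero_mul, mul_zero, add_zero, zero_add] <;>
      field_simp <;>
      first | ring1 | linear_combination 4 * hpyth - 4 * hA
  refine ⟨B, hB, ?_⟩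
  rw [Matrix.inv_eq_adjugate_of_det_eq_one hB, hBA, Matrix.mul_assoc, Matrix.mul_adjugate, hB,
    one_smul, Matrix.mul_one]

theorem isRotationNumber_iff (hA : A.det = 1) (hr : A 1 0 ≠ 0) :
    IsRotationNumber A θ ↔ θ ∈ Ioo 0 (1 / 2) ∪ Ioo (1 / 2) 1 ∧
      cos (2 * π * θ) = A.trace / 2 ∧ 0 < A 1 0 * sin (2 * π * θ) :=
  ⟨fun h => ⟨h.1, h.cos_eq, h.apply_one_zero_mul_sin_pos hr⟩,
    fun ⟨hθ, hcos, hsin⟩ => ⟨hθ, exists_conj_eq_rot hA hr hcos hsin⟩⟩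

theorem Theta_eq_rotationAngle (hA : A.det = 1) (htr : |A.trace| < 2) :
    Theta A = rotationAngle A := by
  have hr := Matrix.apply_one_zero_ne_zero_of_abs_trace_lt_two hA htr
  have hex : ∃ θ, IsRotationNumber A θ :=
    ⟨_, (isRotationNumber_iff hA hr).2 (rotationAngle_spec htr hr)⟩
  obtain ⟨hθ, hcos, hsin⟩ := (isRotationNumber_iff hA hr).1 hex.choose_spec
  rw [Theta, dif_pos hex]
  exact eq_rotationAngle hθ hcos hsin

theorem exists_pos_hasDerivAt_Theta {X : ℝ → Matrix (Fin 2) (Fin 2) ℝ} {E₀ T' : ℝ}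
    (hdet : ∀ E, (X E).det = 1) (htr : |(X E₀).trace| < 2)
    (hcont : ContinuousAt (fun E => X E 1 0) E₀)
    (hT : HasDerivAt (fun E => (X E).trace) T' E₀) (hsign : X E₀ 1 0 * T' < 0) :
    ∃ L, 0 < L ∧ HasDerivAt (fun E => Theta (X E)) L E₀ := by
  have hw := abs_lt.1 htr
  set c := 1 / √(1 - ((X E₀).trace / 2) ^ 2) / 2 / (2 * π)
  have hc : 0 < c := by
    have : 0 < 1 - ((X E₀).trace / 2) ^ 2 := by nlinarith
    have := pi_pos
    positivity
  have harccos : HasDerivAt (fun E => arccos ((X E).trace / 2) / (2 * π)) (-(c * T')) E₀ := by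
    refine (((hasDerivAt_arccos (by linarith) (by linarith)).comp E₀
      (hT.div_const 2)).div_const (2 * π)).congr_deriv ?_
    simp only [c]
    ring
  have hnear : ∀ᶠ E in 𝓝 E₀, |(X E).trace| < 2 :=
    (continuous_abs.continuousAt.comp hT.continuousAt).eventually (eventually_lt_nhds htr)
  rcases (Matrix.apply_one_zero_ne_zero_of_abs_trace_lt_two (hdet E₀) htr).lt_or_gt
    with hneg | hpos
  · refine ⟨c * T', mul_pos hc (by nlinarith), ?_⟩
    refine ((harccos.const_sub 1).congr_deriv (neg_neg _)).congr_of_eventuallyEq ?_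
    filter_upwards [hnear, hcont.eventually (eventually_lt_nhds hneg)] with E hE hE'
    rw [Theta_eq_rotationAngle (hdet E) hE, rotationAngle, if_neg (not_lt.2 hE'.le)]
  · refine ⟨-(c * T'), by nlinarith, harccos.congr_of_eventuallyEq ?_⟩
    filter_upwards [hnear, hcont.eventually (eventually_gt_nhds hpos)] with E hE hE'
    rw [Theta_eq_rotationAngle (hdet E) hE, rotationAngle, if_pos hE']

end RotationNumber

section OperatorNorm

-- A submultiplicative norm on matrices; its topology is the product topology, the one in which
-- the derivatives of `IsTransferFamily` are taken.
attribute [local instance] Matrix.linftyOpNormedRing Matrix.linftyOpNormedAlgebra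

variable {f : ℝ → Matrix (Fin 2) (Fin 2) ℝ} {f' : Matrix (Fin 2) (Fin 2) ℝ} {x : ℝ}

theorem HasDerivAt.matrix_trace (h : HasDerivAt f f' x) :
    HasDerivAt (fun y => (f y).trace) f'.trace x :=
  (Matrix.traceLinearMap (Fin 2) ℝ ℝ).toContinuousLinearMap.hasFDerivAt.comp_hasDerivAt x h

theorem HasDerivAt.matrix_adjugate (h : HasDerivAt f f' x) :
    HasDerivAt (fun y => (f y).adjugate) f'.adjugate x := by
  simp only [Matrix.adjugate_fin_two_eq_trace_smul_one_sub]
  exact h.matrix_trace.smul_const (1 : Matrix (Fin 2) (Fin 2) ℝ) |>.sub h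

namespace IsTransferFamily

variable {V : ℝ → ℝ} {A : ℝ → ℝ → ℝ → Matrix (Fin 2) (Fin 2) ℝ}

theorem continuous (hA : IsTransferFamily V A) (E t : ℝ) : Continuous fun τ => A E t τ :=
  continuous_iff_continuousAt.2 fun τ => (hA.2.2 E t τ).continuousAt

theorem apply_one_zero_mul_integral_pos (hA : IsTransferFamily V A) {t s E₀ : ℝ} (hts : t < s)
    (htr : |(A E₀ t s).trace| < 2) :
    0 < A E₀ t s 1 0 * ∫ u in t..s, (A E₀ t u * A E₀ t s * (A E₀ t u).adjugate) 1 0 := by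
  rw [← intervalIntegral.integral_const_mul]
  refine intervalIntegral.intervalIntegral_pos_of_pos_on ?_ (fun u _ =>
    Matrix.apply_one_zero_mul_conj_apply_one_zero_pos (hA.2.1 E₀ t s) htr (hA.2.1 E₀ t u)) hts
  exact (continuous_const.mul ((((hA.continuous E₀ t).matrix_mul continuous_const).matrix_mul
    (hA.continuous E₀ t).matrix_adjugate).matrix_elem 1 0)).intervalIntegrable _ _

theorem hasDerivAt_adjugate_mul (hA : IsTransferFamily V A) (t E₀ ε τ : ℝ) :
    HasDerivAt (fun τ => (A E₀ t τ).adjugate * A (E₀ + ε) t τ)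
      (ε • ((A E₀ t τ).adjugate * !![0, -1; 0, 0] * A E₀ t τ) *
        ((A E₀ t τ).adjugate * A (E₀ + ε) t τ)) τ := by
  obtain ⟨-, hdet, hode⟩ := hA
  have hode' : ∀ E, HasDerivAt (fun τ => A E t τ) (!![0, -E - V τ; 1, 0] * A E t τ) τ :=
    fun E => hode E t τ
  refine ((hode' E₀).matrix_adjugate.mul (hode' (E₀ + ε))).congr_deriv ?_
  have hM : !![0, -(E₀ + ε) - V τ; 1, 0] = !![0, -E₀ - V τ; 1, 0] + ε • !![0, -1; 0, 0] := by
    ext i j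
    fin_cases i <;> fin_cases j <;>
      simp only [Matrix.add_apply, Matrix.smul_apply, Matrix.of_apply, Fin.zero_eta, Fin.mk_one,
        Fin.isValue, Matrix.cons_val', Matrix.cons_val_zero, Matrix.cons_val_one,
        Matrix.cons_val_fin_one, smul_eq_mul] <;> ring1
  have hadj : (!![0, -E₀ - V τ; 1, 0] : Matrix (Fin 2) (Fin 2) ℝ).adjugate
      = -!![0, -E₀ - V τ; 1, 0] := by
    ext i j; fin_cases i <;> fin_cases j <;> simp [Matrix.adjugate_fin_two]
  have hcancel : ε • ((A E₀ t τ).adjugate * !![0, -1; 0, 0] * A E₀ t τ) *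
      ((A E₀ t τ).adjugate * A (E₀ + ε) t τ) = ε • ((A E₀ t τ).adjugate * !![0, -1; 0, 0] *
        (A E₀ t τ * (A E₀ t τ).adjugate) * A (E₀ + ε) t τ) := by
    simp only [mul_assoc, smul_mul_assoc]
  rw [Matrix.adjugate_mul_distrib, hadj, hM, hcancel, Matrix.mul_adjugate, hdet, one_smul]
  simp only [mul_add, add_mul, neg_mul, mul_neg, mul_one, smul_mul_assoc, mul_smul_comm, mul_assoc]
  abel

theorem hasDerivAt_energy (hA : IsTransferFamily V A) {t s : ℝ} (E₀ : ℝ) (hts : t ≤ s) :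
    HasDerivAt (fun E => A E t s)
      (A E₀ t s * ∫ u in t..s, (A E₀ t u).adjugate * !![0, -1; 0, 0] * A E₀ t u) E₀ := by
  have hB : Continuous fun u => (A E₀ t u).adjugate * !![0, -1; 0, 0] * A E₀ t u :=
    ((hA.continuous E₀ t).matrix_adjugate.mul continuous_const).mul (hA.continuous E₀ t)
  have h : HasDerivAt (fun ε => A E₀ t s * ((A E₀ t s).adjugate * A (E₀ + ε) t s))
      (A E₀ t s * ∫ u in t..s, (A E₀ t u).adjugate * !![0, -1; 0, 0] * A E₀ t u) (E₀ - E₀) := by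
    rw [sub_self]
    exact (hasDerivAt_zero_of_hasDerivAt_smul_mul hB (hA.hasDerivAt_adjugate_mul t E₀)
      (fun ε => by simp [hA.1]) hts).const_mul (A E₀ t s)
  refine (h.comp_sub_const E₀ E₀).congr_of_eventuallyEq (.of_forall fun E => ?_)
  simp only [← mul_assoc, Matrix.mul_adjugate, hA.2.1, one_smul, one_mul, add_sub_cancel]

theorem hasDerivAt_trace (hA : IsTransferFamily V A) {t s : ℝ} (E₀ : ℝ) (hts : t ≤ s) :
    HasDerivAt (fun E => (A E t s).trace)
      (-∫ u in t..s, (A E₀ t u * A E₀ t s * (A E₀ t u).adjugate) 1 0) E₀ := by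
  refine (hA.hasDerivAt_energy E₀ hts).matrix_trace.congr_deriv ?_
  have hB : Continuous fun u => (A E₀ t u).adjugate * !![0, -1; 0, 0] * A E₀ t u :=
    ((hA.continuous E₀ t).matrix_adjugate.mul continuous_const).mul (hA.continuous E₀ t)
  let φ := ((Matrix.traceLinearMap (Fin 2) ℝ ℝ) ∘ₗ
    LinearMap.mulLeft ℝ (A E₀ t s)).toContinuousLinearMap
  have hφ : ∀ u, φ ((A E₀ t u).adjugate * !![0, -1; 0, 0] * A E₀ t u)
      = -(A E₀ t u * A E₀ t s * (A E₀ t u).adjugate) 1 0 := by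
    intro u
    simp only [φ, LinearMap.coe_toContinuousLinearMap', LinearMap.comp_apply,
      LinearMap.mulLeft_apply, Matrix.traceLinearMap_apply]
    rw [← Matrix.mul_assoc, Matrix.trace_mul_comm, ← Matrix.mul_assoc, ← Matrix.mul_assoc]
    simp [Matrix.trace_fin_two, Matrix.mul_apply, Fin.sum_univ_two]
  rw [← intervalIntegral.integral_neg, ← funext hφ]
  exact (φ.intervalIntegral_comp_comm (hB.intervalIntegrable _ _)).symm

theorem continuousAt_apply (hA : IsTransferFamily V A) {t s : ℝ} (E₀ : ℝ) (hts : t ≤ s)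
    (i j : Fin 2) : ContinuousAt (fun E => A E t s i j) E₀ :=
  (continuous_id.matrix_elem i j).continuousAt.comp (hA.hasDerivAt_energy E₀ hts).continuousAt

end IsTransferFamily

end OperatorNorm

theorem stmt4_general (V : ℝ → ℝ)
    (A : ℝ → ℝ → ℝ → Matrix (Fin 2) (Fin 2) ℝ) (hA : IsTransferFamily V A)
    (t s E₀ : ℝ) (hts : t < s) (htr : |(A E₀ t s).trace| < 2) :
    ∃ L : ℝ, 0 < L ∧ HasDerivAt (fun E => Theta (A E t s)) L E₀ := by
  refine exists_pos_hasDerivAt_Theta (fun E => hA.2.1 E t s) htr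
    (hA.continuousAt_apply E₀ hts.le 1 0) (hA.hasDerivAt_trace E₀ hts.le) ?_
  rw [mul_neg, neg_lt_zero]
  exact hA.apply_one_zero_mul_integral_pos hts htr

/-- Monotonicity of the rotation number of continuum transfer matrices (Lemma 2.1):
if `t < s` and `|tr A[V](E₀,t,s)| < 2` then `E ↦ Θ(A[V](E,t,s))` has a positive
derivative at `E₀`. -/
theorem stmt4 (V : ℝ → ℝ) (hV : Continuous V)
    (A : ℝ → ℝ → ℝ → Matrix (Fin 2) (Fin 2) ℝ) (hA : IsTransferFamily V A)
    (t s E₀ : ℝ) (hts : t < s) (htr : |(A E₀ t s).trace| < 2) :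
    ∃ L : ℝ, 0 < L ∧ HasDerivAt (fun E => Theta (A E t s)) L E₀ :=
  stmt4_general V A hA t s E₀ hts htr
end

section
/- Let V : ℝ → ℝ be continuous and T-periodic, and let E ∈ Ω(V) be such that Θ(A[V](E)) is irrational. Then for every ε > 0 there exists N ∈ ℕ such that for every function ũ : ℝ → ℍ satisfying A[V](E,t,s)·ũ(t) = ũ(s) for all t,s ∈ ℝ (Möbius action), one has (1/(NT)) ∫₀^{NT} (1/Im ũ(t)) dt > (1/T) ∫₀^{T} (1/Im u[V](E,t)) dt − ε. (Lemma 2.2, with the explicit hypothesis, holding for almost every E in the spectrum, under which it is proved.) -/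
open MeasureTheory Filter Real
noncomputable section

attribute [local instance] Matrix.normedAddCommGroup Matrix.normedSpace
attribute [local instance] Classical.propDecidable

/-!
Write `A[V](E,0,T) = C R_θ C⁻¹` and `Q t = A[V](E,0,t) C`. The cocycle identity and periodicity
give `A[V](E,t,t+kT) = Q t R_{kθ} (Q t)⁻¹`, so `u[V](E,t) = Q t • i`, and an invariant section
satisfies `ũ(t+kT) = (Q t R_{kθ}) • w` with `w = (Q t)⁻¹ • ũ t`. Along this orbit `1 / Im` equals
`(M + K₁ cos 4πkθ + K₂ sin 4πkθ) / Im w` with `K₁² + K₂² ≤ M²` and `M ≥ Im w / Im (Q t • i)`.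
Since `2θ ∉ ℤ` the partial sums of `exp (4πikθ)` stay bounded, so the sum over `k < N` is at
least `(N - O(1)) / Im (Q t • i)`; integrating over one period gives the claim.
-/

open UpperHalfPlane hiding fixedPt
open Matrix
open scoped UpperHalfPlane MatrixGroups

section MatrixCalculus

variable {𝕜 : Type*} [NontriviallyNormedField 𝕜] {m n p : Type*} {x : 𝕜}

theorem hasDerivAt_matrix_iff [Fintype m] [Fintype n] {M : 𝕜 → Matrix m n 𝕜}
    {M' : Matrix m n 𝕜} :
    HasDerivAt M M' x ↔ ∀ i j, HasDerivAt (fun y => M y i j) (M' i j) x :=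
  ⟨fun h i j => hasDerivAt_pi.1 (hasDerivAt_pi.1 h i) j,
    fun h => hasDerivAt_pi.2 fun i => hasDerivAt_pi.2 (h i)⟩

theorem HasDerivAt.matrix_mul [Fintype m] [Fintype n] [Fintype p] {M : 𝕜 → Matrix m n 𝕜}
    {X : 𝕜 → Matrix n p 𝕜} {M' : Matrix m n 𝕜} {X' : Matrix n p 𝕜}
    (hM : HasDerivAt M M' x) (hX : HasDerivAt X X' x) :
    HasDerivAt (fun y => M y * X y) (M' * X x + M x * X') x := by
  refine hasDerivAt_matrix_iff.2 fun i j => ?_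
  simp only [Matrix.add_apply, Matrix.mul_apply, ← Finset.sum_add_distrib]
  exact HasDerivAt.fun_sum fun k _ =>
    (hasDerivAt_matrix_iff.1 hM i k).mul (hasDerivAt_matrix_iff.1 hX k j)

theorem HasDerivAt.adjugate_fin_two {M : 𝕜 → Matrix (Fin 2) (Fin 2) 𝕜}
    {M' : Matrix (Fin 2) (Fin 2) 𝕜} (hM : HasDerivAt M M' x) :
    HasDerivAt (fun y => (M y).adjugate) M'.adjugate x := by
  have h := hasDerivAt_matrix_iff.1 hM
  simp_rw [Matrix.adjugate_fin_two]
  refine hasDerivAt_matrix_iff.2 fun i j => ?_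
  fin_cases i <;> fin_cases j <;> simp
  exacts [h 1 1, (h 0 1).neg, (h 1 0).neg, h 0 0]

end MatrixCalculus

namespace IsTransferFamily

variable {V : ℝ → ℝ} {A : ℝ → ℝ → ℝ → Matrix (Fin 2) (Fin 2) ℝ}

/-- The coefficient matrix is trace free, so `adj (A E t s) * X s` does not depend on `s`. -/
theorem eq_mul_of_hasDerivAt (hA : IsTransferFamily V A) {E : ℝ}
    {X : ℝ → Matrix (Fin 2) (Fin 2) ℝ} (hX : ∀ s, HasDerivAt X (!![0, -E - V s; 1, 0] * X s) s)
    (t s : ℝ) : X s = A E t s * X t := by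
  have hconst : ∀ r, HasDerivAt (fun r => (A E t r).adjugate * X r) 0 r := by
    intro r
    convert HasDerivAt.matrix_mul (HasDerivAt.adjugate_fin_two (hA.2.2 E t r)) (hX r) using 1
    have hJ : !![0, -(-E - V r); -1, 0] + !![0, -E - V r; 1, 0] = 0 := by
      ext i j; fin_cases i <;> fin_cases j <;> simp; ring
    rw [adjugate_mul_distrib, adjugate_fin_two_of, Matrix.mul_assoc, ← Matrix.mul_add,
      ← Matrix.add_mul, hJ, Matrix.zero_mul, Matrix.mul_zero]
  have h := is_const_of_deriv_eq_zero (fun r => (hconst r).differentiableAt)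
    (fun r => (hconst r).deriv) s t
  calc X s = A E t s * ((A E t s).adjugate * X s) := by
        rw [← Matrix.mul_assoc, mul_adjugate, hA.2.1, one_smul, Matrix.one_mul]
    _ = A E t s * X t := by rw [h, hA.1, adjugate_one, Matrix.one_mul]

theorem cocycle (hA : IsTransferFamily V A) (E t r s : ℝ) : A E r s * A E t r = A E t s :=
  (hA.eq_mul_of_hasDerivAt (hA.2.2 E t) r s).symm

theorem add_period (hA : IsTransferFamily V A) {T : ℝ} (hper : Function.Periodic V T)
    (E t s : ℝ) : A E (t + T) (s + T) = A E t s := by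
  have h := hA.eq_mul_of_hasDerivAt (X := fun s => A E (t + T) (s + T))
    (fun s => by
      have hX := (hA.2.2 E (t + T) (s + T)).comp_add_const s T
      rw [hper s] at hX
      exact hX) t s
  rwa [hA.1, Matrix.mul_one] at h

def toSL (hA : IsTransferFamily V A) (E t s : ℝ) : SL(2, ℝ) := ⟨A E t s, hA.2.1 E t s⟩

@[simp]
theorem coe_toSL (hA : IsTransferFamily V A) (E t s : ℝ) :
    (hA.toSL E t s : Matrix (Fin 2) (Fin 2) ℝ) = A E t s :=
  rfl

theorem toSL_self (hA : IsTransferFamily V A) (E t : ℝ) : hA.toSL E t t = 1 :=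
  Subtype.ext (hA.1 E t)

theorem toSL_mul_toSL (hA : IsTransferFamily V A) (E t r s : ℝ) :
    hA.toSL E r s * hA.toSL E t r = hA.toSL E t s :=
  Subtype.ext (hA.cocycle E t r s)

theorem toSL_add_period (hA : IsTransferFamily V A) {T : ℝ} (hper : Function.Periodic V T)
    (E t s : ℝ) : hA.toSL E (t + T) (s + T) = hA.toSL E t s :=
  Subtype.ext (hA.add_period hper E t s)

theorem toSL_zero_nat_mul (hA : IsTransferFamily V A) {T : ℝ} (hper : Function.Periodic V T)
    (E : ℝ) (k : ℕ) : hA.toSL E 0 (k * T) = hA.toSL E 0 T ^ k := by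
  induction k with
  | zero => simpa using hA.toSL_self E 0
  | succ k ih =>
    have hshift : hA.toSL E (k * T) ((k + 1 : ℕ) * T) = hA.toSL E 0 T := by
      rw [← hA.toSL_add_period (hper.nat_mul k) E 0 T, zero_add]
      congr 1; push_cast; ring
    rw [pow_succ', ← ih, ← hA.toSL_mul_toSL E 0 (k * T), hshift]

theorem toSL_add_nat_mul (hA : IsTransferFamily V A) {T : ℝ} (hper : Function.Periodic V T)
    (E t : ℝ) (k : ℕ) :
    hA.toSL E t (t + k * T) = hA.toSL E 0 t * hA.toSL E 0 T ^ k * (hA.toSL E 0 t)⁻¹ := by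
  rw [eq_mul_inv_iff_mul_eq, hA.toSL_mul_toSL, ← hA.toSL_zero_nat_mul hper,
    ← hA.toSL_mul_toSL E 0 (k * T), ← hA.toSL_add_period (hper.nat_mul k) E 0 t, zero_add,
    add_comm]

theorem continuous_coe_toSL_smul (hA : IsTransferFamily V A) (E : ℝ) (z : ℍ) :
    Continuous fun t => ((hA.toSL E 0 t • z : ℍ) : ℂ) := by
  have hA' : Continuous (A E 0) :=
    continuous_iff_continuousAt.2 fun s => (hA.2.2 E 0 s).continuousAt
  have h : ∀ i j, Continuous fun t => ((A E 0 t i j : ℝ) : ℂ) := fun i j =>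
    Complex.continuous_ofReal.comp (hA'.matrix_elem i j)
  simp only [coe_specialLinearGroup_apply, Algebra.algebraMap_self, RingHom.id_apply, coe_toSL]
  exact (((h 0 0).mul continuous_const).add (h 0 1)).div
    (((h 1 0).mul continuous_const).add (h 1 1))
    fun t => denom_ne_zero (SpecialLinearGroup.mapGL ℝ (hA.toSL E 0 t)) z

end IsTransferFamily

theorem rot_det (θ : ℝ) : (rot θ).det = 1 := by
  simp [rot, det_fin_two, ← sq, Real.cos_sq_add_sin_sq]

def rotSL (θ : ℝ) : SL(2, ℝ) := ⟨rot θ, rot_det θ⟩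

@[simp]
theorem coe_rotSL (θ : ℝ) : (rotSL θ : Matrix (Fin 2) (Fin 2) ℝ) = rot θ :=
  rfl

theorem rotSL_zero : rotSL 0 = 1 := by
  ext i j
  fin_cases i <;> fin_cases j <;> simp [rot]

theorem rotSL_add (a b : ℝ) : rotSL (a + b) = rotSL a * rotSL b := by
  ext i j
  fin_cases i <;> fin_cases j <;>
    simp [rot, Matrix.mul_apply, mul_add, Real.cos_add, Real.sin_add] <;> ring

theorem rotSL_pow (θ : ℝ) (k : ℕ) : rotSL θ ^ k = rotSL (k * θ) := by
  induction k with
  | zero => simp [rotSL_zero]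
  | succ k ih =>
    rw [pow_succ, ih, ← rotSL_add]
    congr 1
    push_cast
    ring

theorem rotSL_smul_eq_self_iff {θ : ℝ} (hθ : Real.sin (2 * π * θ) ≠ 0) {z : ℍ} :
    rotSL θ • z = z ↔ z = I := by
  set g := SpecialLinearGroup.mapGL ℝ (rotSL θ)
  have hdet : 0 < g.val.det := by simp [g, rot_det]
  have hell : g.IsElliptic := by
    simp [GeneralLinearGroup.IsElliptic, IsElliptic, discr_fin_two, g, rot, trace_fin_two]
    nlinarith [sq_pos_of_ne_zero hθ]
  have hI : g • I = I := (gl_smul_I_eq_I_iff_of_pos hdet).2 (by simp [g, rot])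
  change g • z = z ↔ z = I
  rw [gl_smul_eq_self_iff_eq_fixedPt hdet hell, ← (gl_smul_eq_self_iff_eq_fixedPt hdet hell).1 hI]

theorem moebius_eq_coe_smul (g : SL(2, ℝ)) (z : ℍ) : moebius g z = ↑(g • z) := by
  rw [coe_specialLinearGroup_apply]; rfl

theorem fixedPt_eq_of_forall_smul_eq_self_iff {g : SL(2, ℝ)} {z : ℍ}
    (h : ∀ w : ℍ, g • w = w ↔ w = z) : fixedPt g = z := by
  have hex : ∃ w : ℂ, 0 < w.im ∧ moebius g w = w :=
    ⟨z, z.im_pos, by rw [moebius_eq_coe_smul, (h z).2 rfl]⟩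
  rw [fixedPt, dif_pos hex]
  obtain ⟨hpos, hfix⟩ := hex.choose_spec
  have := (h ⟨_, hpos⟩).1 (UpperHalfPlane.ext (by rw [← moebius_eq_coe_smul]; exact hfix))
  exact congrArg UpperHalfPlane.coe this

theorem conj_rotSL_smul_eq_self_iff (Q : SL(2, ℝ)) {θ : ℝ} (hθ : Real.sin (2 * π * θ) ≠ 0)
    {w : ℍ} : (Q * rotSL θ * Q⁻¹) • w = w ↔ w = Q • I := by
  rw [mul_smul, mul_smul, smul_eq_iff_eq_inv_smul, rotSL_smul_eq_self_iff hθ,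
    inv_smul_eq_iff]

theorem inv_im_smul (g : SL(2, ℝ)) (z : ℍ) :
    (g • z).im⁻¹ =
      (g 1 0 ^ 2 * Complex.normSq z + 2 * g 1 0 * g 1 1 * z.re + g 1 1 ^ 2) / z.im := by
  rw [show g • z = SpecialLinearGroup.mapGL ℝ g • z from rfl, im_smul_eq_div_normSq]
  simp [denom, Complex.normSq_apply]
  ring

def geomBound (ψ : ℝ) : ℝ := 2 / ‖Complex.exp (ψ * Complex.I) - 1‖

theorem norm_sum_exp_mul_I_le {ψ : ℝ} (hψ : Complex.exp (ψ * Complex.I) ≠ 1) (N : ℕ) :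
    ‖∑ k ∈ Finset.range N, Complex.exp ((k * ψ : ℝ) * Complex.I)‖ ≤ geomBound ψ := by
  have hpow : ∀ k : ℕ, Complex.exp ((k * ψ : ℝ) * Complex.I) = Complex.exp (ψ * Complex.I) ^ k := by
    intro k
    rw [← Complex.exp_nat_mul]
    push_cast
    ring_nf
  simp_rw [hpow]
  rw [geom_sum_eq hψ, norm_div, geomBound]
  gcongr
  calc ‖Complex.exp (ψ * Complex.I) ^ N - 1‖
      ≤ ‖Complex.exp (ψ * Complex.I) ^ N‖ + ‖(1 : ℂ)‖ := norm_sub_le _ _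
    _ = 2 := by rw [norm_pow, Complex.norm_exp_ofReal_mul_I]; norm_num

theorem le_sum_add_mul_cos_add_mul_sin {M K₁ K₂ ψ : ℝ} (hψ : Complex.exp (ψ * Complex.I) ≠ 1)
    (hM : 0 ≤ M) (hK : K₁ ^ 2 + K₂ ^ 2 ≤ M ^ 2) (N : ℕ) :
    (N - geomBound ψ) * M ≤
      ∑ k ∈ Finset.range N, (M + K₁ * Real.cos (k * ψ) + K₂ * Real.sin (k * ψ)) := by
  set κ : ℂ := K₁ - K₂ * Complex.I
  have hκ : ‖κ‖ ≤ M := by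
    refine (pow_le_pow_iff_left₀ (norm_nonneg κ) hM two_ne_zero).1 ?_
    rw [← Complex.normSq_eq_norm_sq, Complex.normSq_apply]
    simpa [κ, ← sq] using hK
  have hterm : ∀ k : ℕ, K₁ * Real.cos (k * ψ) + K₂ * Real.sin (k * ψ) =
      (κ * Complex.exp ((k * ψ : ℝ) * Complex.I)).re := by
    intro k
    rw [Complex.mul_re, Complex.exp_ofReal_mul_I_re, Complex.exp_ofReal_mul_I_im]
    simp [κ]
  set S := ∑ k ∈ Finset.range N, Complex.exp ((k * ψ : ℝ) * Complex.I)
  calc (N - geomBound ψ) * M = N * M - M * geomBound ψ := by ring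
    _ ≤ N * M - ‖κ‖ * ‖S‖ := by gcongr; exact norm_sum_exp_mul_I_le hψ N
    _ ≤ N * M + (κ * S).re := by
        have := Complex.abs_re_le_norm (κ * S)
        rw [norm_mul] at this
        linarith [neg_abs_le (κ * S).re]
    _ = _ := by
        rw [Finset.mul_sum, Complex.re_sum]
        simp_rw [add_assoc, hterm]
        rw [Finset.sum_add_distrib, Finset.sum_const, Finset.card_range, nsmul_eq_mul]

theorem exists_inv_im_mul_rotSL_smul_eq (g : SL(2, ℝ)) (w : ℍ) :
    ∃ K₁ K₂ : ℝ,
      K₁ ^ 2 + K₂ ^ 2 ≤ ((g • I).im⁻¹ * (Complex.normSq w + 1) / 2) ^ 2 ∧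
      ∀ φ : ℝ, ((g * rotSL φ) • w).im⁻¹ = ((g • I).im⁻¹ * (Complex.normSq w + 1) / 2 +
        K₁ * Real.cos (4 * π * φ) + K₂ * Real.sin (4 * π * φ)) / w.im := by
  set p := g 1 0
  set q := g 1 1
  set x := w.re
  set y := w.im
  have hgI : (g • I).im⁻¹ = p ^ 2 + q ^ 2 := by simp [inv_im_smul, p, q]
  have hw : Complex.normSq w = x ^ 2 + y ^ 2 := by simp [Complex.normSq_apply, x, y, sq]
  refine ⟨(p ^ 2 - q ^ 2) * (x ^ 2 + y ^ 2 - 1) / 2 + 2 * p * q * x,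
    p * q * (x ^ 2 + y ^ 2 - 1) + (q ^ 2 - p ^ 2) * x, ?_, fun φ => ?_⟩
  · -- the gap `M ^ 2 - (K₁ ^ 2 + K₂ ^ 2)` is exactly `((p ^ 2 + q ^ 2) * y) ^ 2`
    rw [hgI, hw]
    nlinarith [sq_nonneg ((p ^ 2 + q ^ 2) * y)]
  · have h10 : (g * rotSL φ) 1 0 = p * Real.cos (2 * π * φ) + q * Real.sin (2 * π * φ) := by
      simp [Matrix.mul_apply, Fin.sum_univ_two, rot, p, q]
    have h11 : (g * rotSL φ) 1 1 = -p * Real.sin (2 * π * φ) + q * Real.cos (2 * π * φ) := by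
      simp [Matrix.mul_apply, Fin.sum_univ_two, rot, p, q]
    have hsc := Real.sin_sq_add_cos_sq (2 * π * φ)
    rw [inv_im_smul, h10, h11, hgI, hw, show 4 * π * φ = 2 * (2 * π * φ) by ring,
      Real.cos_two_mul, Real.sin_two_mul]
    congr 1
    linear_combination (q ^ 2 * (x ^ 2 + y ^ 2) - 2 * p * q * x + p ^ 2) * hsc

theorem le_sum_inv_im_mul_rotSL_smul (g : SL(2, ℝ)) (w : ℍ) {θ : ℝ}
    (hθ : Complex.exp ((4 * π * θ : ℝ) * Complex.I) ≠ 1) {N : ℕ}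
    (hN : geomBound (4 * π * θ) ≤ N) :
    (N - geomBound (4 * π * θ)) * (g • I).im⁻¹ ≤
      ∑ k ∈ Finset.range N, ((g * rotSL (k * θ)) • w).im⁻¹ := by
  obtain ⟨K₁, K₂, hK, hφ⟩ := exists_inv_im_mul_rotSL_smul_eq g w
  set M := (g • I).im⁻¹ * (Complex.normSq w + 1) / 2
  have hM : (g • I).im⁻¹ * w.im ≤ M := by
    have : 2 * w.im ≤ Complex.normSq w + 1 := by
      rw [Complex.normSq_apply, coe_re, coe_im]; nlinarith [sq_nonneg (w.im - 1), sq_nonneg w.re]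
    have := mul_le_mul_of_nonneg_left this (inv_pos.2 (g • I).im_pos).le
    simp only [M]; linarith
  have hsum := le_sum_add_mul_cos_add_mul_sin hθ ((mul_nonneg (inv_pos.2 (g • I).im_pos).le
    (by positivity)).trans hM) hK N
  have hk : ∀ k : ℕ, 4 * π * (k * θ) = k * (4 * π * θ) := fun k => by ring
  simp_rw [hφ, hk, ← Finset.sum_div]
  rw [le_div_iff₀ w.im_pos]
  calc (N - geomBound (4 * π * θ)) * (g • I).im⁻¹ * w.im
      ≤ (N - geomBound (4 * π * θ)) * M := by
        rw [mul_assoc]; exact mul_le_mul_of_nonneg_left hM (sub_nonneg.2 hN)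
    _ ≤ _ := hsum

theorem Irrational.two_mul_ne_intCast {θ : ℝ} (h : Irrational θ) (n : ℤ) : 2 * θ ≠ n := by
  simpa using (h.natCast_mul two_ne_zero).ne_int n

theorem Irrational.sin_two_pi_mul_ne_zero {θ : ℝ} (h : Irrational θ) :
    Real.sin (2 * π * θ) ≠ 0 := by
  rw [Ne, Real.sin_eq_zero_iff]
  rintro ⟨n, hn⟩
  exact h.two_mul_ne_intCast n (mul_left_cancel₀ Real.pi_ne_zero (by linear_combination -hn))

theorem Irrational.exp_four_pi_mul_I_ne_one {θ : ℝ} (h : Irrational θ) :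
    Complex.exp ((4 * π * θ : ℝ) * Complex.I) ≠ 1 := by
  rw [Ne, Complex.exp_eq_one_iff]
  rintro ⟨n, hn⟩
  have hn' : ((4 * π * θ : ℝ) : ℂ) = ((2 * π * n : ℝ) : ℂ) :=
    mul_right_cancel₀ Complex.I_ne_zero (by push_cast at hn ⊢; linear_combination hn)
  exact h.two_mul_ne_intCast n
    (mul_left_cancel₀ Real.two_pi_pos.ne' (by linear_combination Complex.ofReal_injective hn'))

theorem exists_irrational_eq_conj_rotSL {M : SL(2, ℝ)} (h : Irrational (Theta M)) :
    ∃ θ : ℝ, Irrational θ ∧ ∃ C : SL(2, ℝ), M = C * rotSL θ * C⁻¹ := by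
  have hex : ∃ θ, IsRotationNumber M θ := by
    by_contra hno
    -- otherwise `Theta M` is the junk value `0`
    rw [Theta, dif_neg hno] at h
    exact h ⟨0, Rat.cast_zero⟩
  rw [Theta, dif_pos hex] at h
  obtain ⟨-, B, hB, hconj⟩ := hex.choose_spec
  let B' : SL(2, ℝ) := ⟨B, hB⟩
  refine ⟨_, h, B'⁻¹, ?_⟩
  have hrot : B' * M * B'⁻¹ = rotSL hex.choose := by
    refine Subtype.ext ?_
    change B * M * adjugate B = rot _
    rw [← hconj, inv_def, hB, Ring.inverse_one, one_smul]
  rw [← hrot]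
  group

theorem integral_zero_nat_mul_eq_integral_sum {f : ℝ → ℝ} (hf : Continuous f) (T : ℝ) (N : ℕ) :
    ∫ t in (0 : ℝ)..N * T, f t = ∫ t in (0 : ℝ)..T, ∑ k ∈ Finset.range N, f (t + k * T) := by
  have hshift : ∀ k ∈ Finset.range N, IntervalIntegrable (fun t => f (t + k * T)) volume 0 T :=
    fun k _ => (hf.comp (continuous_add_const _)).intervalIntegrable _ _
  rw [intervalIntegral.integral_finsetSum hshift]
  have h := intervalIntegral.sum_integral_adjacent_intervals (a := fun k : ℕ => k * T) (n := N)
    (μ := volume) fun k _ => hf.intervalIntegrable _ _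
  rw [Nat.cast_zero, zero_mul] at h
  rw [← h]
  refine Finset.sum_congr rfl fun k _ => ?_
  rw [intervalIntegral.integral_comp_add_right]
  congr 1 <;> push_cast <;> ring

namespace IsTransferFamily

variable {V : ℝ → ℝ} {A : ℝ → ℝ → ℝ → Matrix (Fin 2) (Fin 2) ℝ} {T E θ : ℝ} {C : SL(2, ℝ)}

theorem toSL_add_nat_mul_eq_conj_rotSL (hA : IsTransferFamily V A) (hper : Function.Periodic V T)
    (hC : hA.toSL E 0 T = C * rotSL θ * C⁻¹) (t : ℝ) (k : ℕ) :
    hA.toSL E t (t + k * T) =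
      hA.toSL E 0 t * C * rotSL (k * θ) * (hA.toSL E 0 t * C)⁻¹ := by
  rw [hA.toSL_add_nat_mul hper, hC, conj_pow, rotSL_pow]
  group

theorem fixedPt_add_period (hA : IsTransferFamily V A) (hper : Function.Periodic V T)
    (hθ : Real.sin (2 * π * θ) ≠ 0) (hC : hA.toSL E 0 T = C * rotSL θ * C⁻¹) (t : ℝ) :
    fixedPt (A E t (t + T)) = ((hA.toSL E 0 t * C) • I : ℍ) := by
  have h := hA.toSL_add_nat_mul_eq_conj_rotSL hper hC t 1
  rw [Nat.cast_one, one_mul, one_mul] at h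
  rw [← hA.coe_toSL, fixedPt_eq_of_forall_smul_eq_self_iff fun w => by
    rw [h]; exact conj_rotSL_smul_eq_self_iff _ hθ]

theorem le_integral_inv_im (hA : IsTransferFamily V A) (hT : 0 ≤ T)
    (hper : Function.Periodic V T) (hθ : Complex.exp ((4 * π * θ : ℝ) * Complex.I) ≠ 1)
    (hC : hA.toSL E 0 T = C * rotSL θ * C⁻¹) {U : ℝ → ℍ}
    (hU : ∀ t s, hA.toSL E t s • U t = U s) {N : ℕ} (hN : geomBound (4 * π * θ) ≤ N) :
    (N - geomBound (4 * π * θ)) * ∫ t in (0 : ℝ)..T, ((hA.toSL E 0 t * C) • I).im⁻¹ ≤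
      ∫ t in (0 : ℝ)..N * T, (U t).im⁻¹ := by
  have hcont : ∀ z : ℍ, Continuous fun t => (hA.toSL E 0 t • z).im⁻¹ := fun z =>
    (Complex.continuous_im.comp (hA.continuous_coe_toSL_smul E z)).inv₀
      fun t => (hA.toSL E 0 t • z).im_pos.ne'
  have hUcont : Continuous fun t => (U t).im⁻¹ := by simpa only [hU 0] using hcont (U 0)
  have hQcont : Continuous fun t => ((hA.toSL E 0 t * C) • I).im⁻¹ := by
    simpa only [mul_smul] using hcont (C • I)
  have horbit : ∀ t (k : ℕ), U (t + k * T) =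
      (hA.toSL E 0 t * C * rotSL (k * θ)) • ((hA.toSL E 0 t * C)⁻¹ • U t) := by
    intro t k
    rw [← hU t, hA.toSL_add_nat_mul_eq_conj_rotSL hper hC, smul_smul]
  rw [integral_zero_nat_mul_eq_integral_sum hUcont, ← intervalIntegral.integral_const_mul]
  refine intervalIntegral.integral_mono_on hT ((continuous_const.mul hQcont).intervalIntegrable _ _)
    ((continuous_finsetSum _ fun k _ => hUcont.comp (continuous_add_const _)).intervalIntegrable
      _ _) fun t _ => ?_
  simp_rw [horbit t]
  exact le_sum_inv_im_mul_rotSL_smul _ _ hθ hN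

end IsTransferFamily

theorem stmt5_general (T : ℝ) (hT : 0 < T) (V : ℝ → ℝ)
    (hper : Function.Periodic V T)
    (A : ℝ → ℝ → ℝ → Matrix (Fin 2) (Fin 2) ℝ) (hA : IsTransferFamily V A)
    (E : ℝ)
    (hirr : Irrational (Theta (A E 0 T)))
    (ε : ℝ) (hε : 0 < ε) :
    ∃ N : ℕ, 0 < N ∧ ∀ u : ℝ → ℂ,
      (∀ t, 0 < (u t).im) →
      (∀ t s, moebius (A E t s) (u t) = u s) →
      (1 / (N * T)) * ∫ t in (0:ℝ)..(N * T), ((u t).im)⁻¹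
        > (1 / T) * (∫ t in (0:ℝ)..T, ((fixedPt (A E t (t + T))).im)⁻¹) - ε := by
  obtain ⟨θ, hθ, C, hC⟩ := exists_irrational_eq_conj_rotSL (M := hA.toSL E 0 T) hirr
  set S := geomBound (4 * π * θ)
  set I₀ := ∫ t in (0 : ℝ)..T, ((hA.toSL E 0 t * C) • I).im⁻¹
  have hfix : ∫ t in (0 : ℝ)..T, ((fixedPt (A E t (t + T))).im)⁻¹ = I₀ := by
    simp_rw [hA.fixedPt_add_period hper hθ.sin_two_pi_mul_ne_zero hC, coe_im]
    rfl
  obtain ⟨N, hN⟩ := exists_nat_gt (max S (S * I₀ / (T * ε)))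
  have hS : 0 ≤ S := div_nonneg zero_le_two (norm_nonneg _)
  have hNpos : (0 : ℝ) < N := hS.trans_lt ((le_max_left _ _).trans_lt hN)
  refine ⟨N, by exact_mod_cast hNpos, fun u hu hinv => ?_⟩
  have hbound := hA.le_integral_inv_im hT.le hper hθ.exp_four_pi_mul_I_ne_one hC
    (U := fun t => ⟨u t, hu t⟩) (fun t s => UpperHalfPlane.ext (by
      rw [← moebius_eq_coe_smul]; exact hinv t s)) (le_max_left _ _ |>.trans hN.le)
  have hsmall : S * I₀ / (N * T) < ε := by
    rw [div_lt_iff₀ (by positivity)]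
    have := (le_max_right _ _).trans_lt hN
    rw [div_lt_iff₀ (by positivity)] at this
    linarith
  rw [hfix, gt_iff_lt]
  calc 1 / T * I₀ - ε < 1 / T * I₀ - S * I₀ / (N * T) := by linarith
    _ = 1 / (N * T) * ((N - S) * I₀) := by field_simp
    _ ≤ 1 / (N * T) * ∫ t in (0 : ℝ)..N * T, (u t).im⁻¹ := by gcongr; exact hbound

/-- Lemma 2.2: for a `T`-periodic continuum potential and an energy `E ∈ Ω(V)` with
irrational rotation number, every invariant section `ũ` of the transfer cocycle in the
upper half-plane has, over long periods, an average of `1/Im ũ` nearly bounded below by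
that of the periodic invariant section `u[V](E,·)`. -/
theorem stmt5 (T : ℝ) (hT : 0 < T) (V : ℝ → ℝ) (hV : Continuous V)
    (hper : Function.Periodic V T)
    (A : ℝ → ℝ → ℝ → Matrix (Fin 2) (Fin 2) ℝ) (hA : IsTransferFamily V A)
    (E : ℝ) (hΩ : |(A E 0 T).trace| < 2)
    (hirr : Irrational (Theta (A E 0 T)))
    (ε : ℝ) (hε : 0 < ε) :
    ∃ N : ℕ, 0 < N ∧ ∀ u : ℝ → ℂ,
      (∀ t, 0 < (u t).im) →
      (∀ t s, moebius (A E t s) (u t) = u s) →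
      (1 / (N * T)) * ∫ t in (0:ℝ)..(N * T), ((u t).im)⁻¹
        > (1 / T) * (∫ t in (0:ℝ)..T, ((fixedPt (A E t (t + T))).im)⁻¹) - ε :=
  stmt5_general T hT V hper A hA E hirr ε hε
end
end

section
/- Let x, y ∈ SL(2,ℝ), let v ∈ ℝ² be a unit eigenvector of yᵀy with eigenvalue ‖y‖^{−2} (a contracting eigendirection of yᵀy), and let w ∈ ℝ² be a unit eigenvector of x xᵀ with eigenvalue ‖x‖² (an expanding eigendirection of x xᵀ). Then ‖yx‖ ≥ ‖y‖·‖x‖·|sin ω|, where ω is the angle between v and w, i.e. |sin ω| = √(1 − ⟨v,w⟩²). (The matrix-product lower bound stated in Section 1.2.) -/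
open Real Matrix
open scoped RealInnerProductSpace
noncomputable section

/-- Operator norm of a 2×2 real matrix acting on the Euclidean plane. -/
def opNorm (A : Matrix (Fin 2) (Fin 2) ℝ) : ℝ := ‖Matrix.toEuclideanCLM (𝕜 := ℝ) A‖

/-!
Put `u = xᵀ w`. As `x xᵀ w = ‖x‖² w`, we get `‖u‖ = ‖x‖` and `y x u = ‖x‖² • y w`, hence
`‖y x‖ ≥ ‖x‖ ‖y w‖`. As `det y = 1`, `y` preserves the area form `v ∧ w` on the plane, so
`‖y v‖ ‖y w‖ ≥ |v ∧ w| = |sin ω|`; and `‖y v‖ = ‖y‖⁻¹` because `v` is an eigenvector of `yᵀ y`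
for `‖y‖⁻²`. Together, `‖y w‖ ≥ ‖y‖ |sin ω|`.
-/

namespace ContinuousLinearMap

variable {E F G : Type*} [NormedAddCommGroup E] [InnerProductSpace ℝ E] [CompleteSpace E]
  [NormedAddCommGroup F] [InnerProductSpace ℝ F] [CompleteSpace F]
  [NormedAddCommGroup G] [InnerProductSpace ℝ G]

theorem norm_apply_sq_of_adjoint_comp_self_apply_eq_smul (T : E →L[ℝ] F) {v : E} {μ : ℝ}
    (h : (adjoint T ∘L T) v = μ • v) : ‖T v‖ ^ 2 = μ * ‖v‖ ^ 2 := by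
  rw [apply_norm_sq_eq_inner_adjoint_right, h, real_inner_smul_right, real_inner_self_eq_norm_sq,
    RCLike.re_to_real]

theorem norm_mul_norm_apply_le_norm_comp_mul_norm (S : F →L[ℝ] G) (T : E →L[ℝ] F) {w : F}
    (hw : (T ∘L adjoint T) w = ‖T‖ ^ 2 • w) : ‖T‖ * ‖S w‖ ≤ ‖S ∘L T‖ * ‖w‖ := by
  set u := adjoint T w
  have hu : ‖u‖ = ‖T‖ * ‖w‖ := by
    have h := norm_apply_sq_of_adjoint_comp_self_apply_eq_smul (adjoint T)
      (by rwa [adjoint_adjoint])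
    rw [← mul_pow] at h
    exact (pow_left_inj₀ (norm_nonneg _) (by positivity) two_ne_zero).mp h
  have hSTu : (S ∘L T) u = ‖T‖ ^ 2 • S w := by
    rw [← map_smul, ← hw]; rfl
  rcases (norm_nonneg T).eq_or_lt with hT | hT
  · rw [← hT, zero_mul]; positivity
  · have h := (S ∘L T).le_opNorm u
    rw [hSTu, norm_smul, hu, norm_pow, norm_norm] at h
    exact le_of_mul_le_mul_left (by linarith) hT

end ContinuousLinearMap

def wedge (p q : EuclideanSpace ℝ (Fin 2)) : ℝ := p 0 * q 1 - p 1 * q 0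

theorem inner_sq_add_wedge_sq (p q : EuclideanSpace ℝ (Fin 2)) :
    ⟪p, q⟫ ^ 2 + wedge p q ^ 2 = ‖p‖ ^ 2 * ‖q‖ ^ 2 := by
  simp only [wedge, EuclideanSpace.inner_eq_star_dotProduct, EuclideanSpace.norm_sq_eq, dotProduct,
    Pi.star_apply, star_trivial, Fin.sum_univ_two, norm_eq_abs, sq_abs]
  ring

theorem abs_wedge_le_norm_mul_norm (p q : EuclideanSpace ℝ (Fin 2)) :
    |wedge p q| ≤ ‖p‖ * ‖q‖ :=
  abs_le_of_sq_le_sq (by rw [mul_pow, ← inner_sq_add_wedge_sq]; nlinarith [sq_nonneg ⟪p, q⟫])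
    (by positivity)

theorem wedge_toEuclideanCLM (A : Matrix (Fin 2) (Fin 2) ℝ) (p q : EuclideanSpace ℝ (Fin 2)) :
    wedge (toEuclideanCLM (𝕜 := ℝ) A p) (toEuclideanCLM (𝕜 := ℝ) A q) = A.det * wedge p q := by
  have h (r : EuclideanSpace ℝ (Fin 2)) (i : Fin 2) :
      toEuclideanCLM (𝕜 := ℝ) A r i = A i 0 * r 0 + A i 1 * r 1 := by
    simp [mulVec, dotProduct, Fin.sum_univ_two]
  simp only [wedge, h, det_fin_two]
  ring

theorem abs_wedge_eq_sqrt_one_sub_inner_sq {v w : EuclideanSpace ℝ (Fin 2)} (hv : ‖v‖ = 1)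
    (hw : ‖w‖ = 1) : |wedge v w| = √(1 - ⟪v, w⟫ ^ 2) := by
  have h := inner_sq_add_wedge_sq v w
  rw [hv, hw] at h
  rw [← sqrt_sq_eq_abs]
  congr 1
  linarith

theorem toEuclideanCLM_transpose {n : Type*} [Fintype n] [DecidableEq n] (A : Matrix n n ℝ) :
    toEuclideanCLM (𝕜 := ℝ) Aᵀ = ContinuousLinearMap.adjoint (toEuclideanCLM (𝕜 := ℝ) A) := by
  rw [← conjTranspose_eq_transpose_of_trivial, ← star_eq_conjTranspose, map_star,
    ContinuousLinearMap.star_eq_adjoint]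

theorem opNorm_nonneg (A : Matrix (Fin 2) (Fin 2) ℝ) : 0 ≤ opNorm A :=
  norm_nonneg _

theorem stmt18_general (x y : Matrix (Fin 2) (Fin 2) ℝ) (hy : y.det = 1)
    (v w : EuclideanSpace ℝ (Fin 2)) (hv : ‖v‖ = 1) (hw : ‖w‖ = 1)
    (hvy : Matrix.toEuclideanCLM (𝕜 := ℝ) (yᵀ * y) v = ((opNorm y) ^ 2)⁻¹ • v)
    (hwx : Matrix.toEuclideanCLM (𝕜 := ℝ) (x * xᵀ) w = ((opNorm x) ^ 2) • w) :
    opNorm (y * x) ≥ opNorm y * opNorm x * Real.sqrt (1 - ⟪v, w⟫ ^ 2) := by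
  set X := toEuclideanCLM (𝕜 := ℝ) x
  set Y := toEuclideanCLM (𝕜 := ℝ) y
  rw [map_mul, toEuclideanCLM_transpose] at hvy hwx
  have hYv : ‖Y v‖ = (opNorm y)⁻¹ := by
    have h := Y.norm_apply_sq_of_adjoint_comp_self_apply_eq_smul hvy
    rw [hv, one_pow, mul_one, ← inv_pow] at h
    exact (pow_left_inj₀ (norm_nonneg _) (inv_nonneg.mpr (opNorm_nonneg y)) two_ne_zero).mp h
  have hYw : opNorm y * √(1 - ⟪v, w⟫ ^ 2) ≤ ‖Y w‖ := by
    have h := abs_wedge_le_norm_mul_norm (Y v) (Y w)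
    rw [wedge_toEuclideanCLM, abs_mul, hy, abs_one, one_mul, hYv,
      abs_wedge_eq_sqrt_one_sub_inner_sq hv hw] at h
    calc opNorm y * √(1 - ⟪v, w⟫ ^ 2) ≤ opNorm y * ((opNorm y)⁻¹ * ‖Y w‖) := by
          gcongr; exact opNorm_nonneg _
      _ ≤ ‖Y w‖ := by
          rw [← mul_assoc]; exact mul_le_of_le_one_left (norm_nonneg _) mul_inv_le_one
  have hYX : opNorm x * ‖Y w‖ ≤ opNorm (y * x) := by
    simpa [opNorm, hw, ContinuousLinearMap.mul_def] using
      Y.norm_mul_norm_apply_le_norm_comp_mul_norm X hwx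
  calc opNorm y * opNorm x * √(1 - ⟪v, w⟫ ^ 2) = opNorm x * (opNorm y * √(1 - ⟪v, w⟫ ^ 2)) := by
        ring
    _ ≤ opNorm x * ‖Y w‖ := by gcongr; exact opNorm_nonneg _
    _ ≤ opNorm (y * x) := hYX

/-- If `v` is a unit eigenvector of `yᵀy` for the eigenvalue `‖y‖⁻²` and `w` is a unit
eigenvector of `xxᵀ` for the eigenvalue `‖x‖²`, then `‖yx‖ ≥ ‖y‖·‖x‖·|sin ω|` where `ω` is
the angle between `v` and `w`. -/
theorem stmt18 (x y : Matrix (Fin 2) (Fin 2) ℝ) (hx : x.det = 1) (hy : y.det = 1)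
    (v w : EuclideanSpace ℝ (Fin 2)) (hv : ‖v‖ = 1) (hw : ‖w‖ = 1)
    (hvy : Matrix.toEuclideanCLM (𝕜 := ℝ) (yᵀ * y) v = ((opNorm y) ^ 2)⁻¹ • v)
    (hwx : Matrix.toEuclideanCLM (𝕜 := ℝ) (x * xᵀ) w = ((opNorm x) ^ 2) • w) :
    opNorm (y * x) ≥ opNorm y * opNorm x * Real.sqrt (1 - ⟪v, w⟫ ^ 2) :=
  stmt18_general x y hy v w hv hw hvy hwx

end
end

section
/- Let z ∈ ℍ and let A ∈ SL(2,ℝ) satisfy tr A = 0 and A·z = z (so that A acts on ℍ as the hyperbolic half-turn about z). Then for every w ∈ ℍ: (1/2)·(1/Im w + 1/Im(A·w)) ≥ 1/Im z. (The key inequality in the proof of Lemma 2.2: if two points of ℍ are symmetric with respect to z, the average of the reciprocals of their imaginary parts is at least the reciprocal of the imaginary part of z.) -/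
/-!
Write `A = [[a, b], [c, -a]]` and `y = Im z`. Since `a² + bc = -1`, the fixed-point equation
`c z² - 2a z - b = 0` gives `(c z - a)² = -1`, so `c z - a = ±i` and `c² y² = 1`.
On the other hand `Im (A·w) = Im w / |c w - a|² ≤ 1 / (c² Im w)`, so with `t = Im w` the claim
reduces to the AM-GM inequality `1/t + t/y² ≥ 2/y`.
-/

noncomputable section

open Complex

theorem moebius_im (A : Matrix (Fin 2) (Fin 2) ℝ) (w : ℂ) :
    (moebius A w).im = A.det * w.im / normSq ((A 1 0 : ℂ) * w + (A 1 1 : ℂ)) := by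
  rw [moebius, div_im, Matrix.det_fin_two, div_sub_div_same]
  congr 1
  simp only [add_re, add_im, mul_re, mul_im, ofReal_re, ofReal_im]
  ring

theorem sq_mul_im_le_normSq (c d : ℝ) (w : ℂ) :
    (c * w.im) ^ 2 ≤ normSq ((c : ℂ) * w + (d : ℂ)) := by
  rw [normSq_apply]
  simp only [add_re, add_im, mul_re, mul_im, ofReal_re, ofReal_im]
  nlinarith [sq_nonneg (c * w.re + d)]

theorem sq_mul_im_le_inv_im_moebius {A : Matrix (Fin 2) (Fin 2) ℝ} (hdet : A.det = 1)
    {w : ℂ} (hw : 0 < w.im) : A 1 0 ^ 2 * w.im ≤ 1 / (moebius A w).im := by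
  rw [moebius_im, hdet, one_mul, one_div_div, le_div_iff₀ hw]
  calc A 1 0 ^ 2 * w.im * w.im = (A 1 0 * w.im) ^ 2 := by ring
    _ ≤ _ := sq_mul_im_le_normSq _ _ w

theorem im_sq_eq_one_of_sq_eq_neg_one {u : ℂ} (hu : u ^ 2 = -1) : u.im ^ 2 = 1 := by
  rw [← I_sq, sq_eq_sq_iff_eq_or_eq_neg] at hu
  rcases hu with rfl | rfl <;> simp

theorem moebius_fixed_sq_eq_neg_one {A : Matrix (Fin 2) (Fin 2) ℝ} (hdet : A.det = 1)
    (htr : A.trace = 0) {z : ℂ} (hz : z.im ≠ 0) (hfix : moebius A z = z) :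
    ((A 1 0 : ℂ) * z - A 0 0) ^ 2 = -1 := by
  rw [Matrix.det_fin_two] at hdet
  rw [Matrix.trace_fin_two] at htr
  have hden : (A 1 0 : ℂ) * z + A 1 1 ≠ 0 := by
    intro h
    rw [moebius, h, div_zero] at hfix
    exact hz (by rw [← hfix, zero_im])
  rw [moebius, div_eq_iff hden] at hfix
  have hdet' : (A 0 0 * A 1 1 - A 0 1 * A 1 0 : ℂ) = 1 := by exact_mod_cast hdet
  have htr' : (A 0 0 + A 1 1 : ℂ) = 0 := by exact_mod_cast htr
  linear_combination (-(A 1 0 : ℂ)) * hfix - hdet' - (A 1 0 * z - A 0 0) * htr'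

theorem sq_mul_sq_im_eq_one_of_moebius_fixed {A : Matrix (Fin 2) (Fin 2) ℝ} (hdet : A.det = 1)
    (htr : A.trace = 0) {z : ℂ} (hz : z.im ≠ 0) (hfix : moebius A z = z) :
    A 1 0 ^ 2 * z.im ^ 2 = 1 := by
  have h := im_sq_eq_one_of_sq_eq_neg_one (moebius_fixed_sq_eq_neg_one hdet htr hz hfix)
  simpa [mul_pow] using h

theorem two_div_le_one_div_add_div_sq {s t : ℝ} (hs : 0 < s) (ht : 0 < t) :
    2 / s ≤ 1 / t + t / s ^ 2 := by
  rw [div_add_div _ _ ht.ne' (by positivity), div_le_div_iff₀ hs (by positivity)]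
  nlinarith [mul_nonneg hs.le (sq_nonneg (s - t))]

/-- If `A ∈ SL(2,ℝ)` has trace zero and fixes `z ∈ ℍ` (so it acts as the hyperbolic
half-turn about `z`), then for every `w ∈ ℍ` the average of the reciprocals of the
imaginary parts of `w` and `A·w` is at least the reciprocal of the imaginary part of `z`. -/
theorem stmt19 (z : ℂ) (hz : 0 < z.im) (A : Matrix (Fin 2) (Fin 2) ℝ)
    (hdet : A.det = 1) (htr : A.trace = 0) (hfix : moebius A z = z)
    (w : ℂ) (hw : 0 < w.im) :
    (1 / 2) * (1 / w.im + 1 / (moebius A w).im) ≥ 1 / z.im := by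
  have hc : A 1 0 ^ 2 = 1 / z.im ^ 2 := by
    rw [eq_div_iff (by positivity)]
    exact sq_mul_sq_im_eq_one_of_moebius_fixed hdet htr hz.ne' hfix
  have hAw : w.im / z.im ^ 2 ≤ 1 / (moebius A w).im := by
    simpa [hc, div_eq_inv_mul] using sq_mul_im_le_inv_im_moebius hdet hw
  have hamgm := two_div_le_one_div_add_div_sq hz hw
  rw [div_eq_mul_one_div] at hamgm
  linarith
end
end
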